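/- Let Z_s be the number of strong-correlation balanced modules of size s in G(N,α,β) with fixed 0 < α, β and α + β ≤ 1, and let λ(α,β) = (1/2)|log α| if α ≥ β and (1/4)(|log α| + |log β|) if α < β. For any ε ∈ (0,1), if s = ⌈(1+ε)·log N/λ(α,β)⌉, then E[Z_s] → 0 and hence P(Z_s ≥ 1) → 0 as N → ∞. -/

import Mathlib

open MeasureTheory ProbabilityTheory Filter
open scoped Classical

/-- The number of strong-correlation balanced modules of size `s`: node sets `S` with
`|S| = s` admitting a partition `S = A ∪ (S \ A)` with all edges inside `A` positive,
all edges inside `S \ A` positive, and all `A`–`(S \ A)` edges negative. -/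
noncomputable def numSCBM {N : ℕ} {Ω : Type*}
    (X : Sym2 (Fin N) → Ω → ℤ) (s : ℕ) (ω : Ω) : ℕ :=
  (Finset.univ.filter (fun S : Finset (Fin N) =>
    S.card = s ∧ ∃ A ⊆ S,
      (∀ i ∈ A, ∀ j ∈ A, i ≠ j → X (s(i, j)) ω = 1) ∧
      (∀ i ∈ S \ A, ∀ j ∈ S \ A, i ≠ j → X (s(i, j)) ω = 1) ∧
      (∀ i ∈ A, ∀ j ∈ S \ A, X (s(i, j)) ω = -1))).card

/-- The exponent `λ(α,β)`: `(1/2)|log α|` if `α ≥ β`, `(1/4)(|log α| + |log β|)` if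
`α < β`. -/
noncomputable def lamExp (α β : ℝ) : ℝ :=
  if β ≤ α then |Real.log α| / 2 else (|Real.log α| + |Real.log β|) / 4

open scoped ENNReal

section AuxSCBM

def EvSet {N : ℕ} {Ω : Type*} (X : Sym2 (Fin N) → Ω → ℤ) (S A : Finset (Fin N)) : Set Ω :=
  {ω | (∀ i ∈ A, ∀ j ∈ A, i ≠ j → X (s(i, j)) ω = 1) ∧
       (∀ i ∈ S \ A, ∀ j ∈ S \ A, i ≠ j → X (s(i, j)) ω = 1) ∧
       (∀ i ∈ A, ∀ j ∈ S \ A, X (s(i, j)) ω = -1)}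

lemma EvSet_measurable {N : ℕ} {Ω : Type*} [MeasurableSpace Ω]
    (X : Sym2 (Fin N) → Ω → ℤ) (hmeas : ∀ e, Measurable (X e))
    (S A : Finset (Fin N)) : MeasurableSet (EvSet X S A) := by
  have h1 : ∀ (v : ℤ) (e : Sym2 (Fin N)), MeasurableSet {ω | X e ω = v} :=
    fun v e => (hmeas e) (measurableSet_singleton v)
  have : EvSet X S A =
      (⋂ i ∈ A, ⋂ j ∈ A, ⋂ (_ : i ≠ j), {ω | X (s(i, j)) ω = 1}) ∩
      ((⋂ i ∈ S \ A, ⋂ j ∈ S \ A, ⋂ (_ : i ≠ j), {ω | X (s(i, j)) ω = 1}) ∩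
       (⋂ i ∈ A, ⋂ j ∈ S \ A, {ω | X (s(i, j)) ω = -1})) := by
    ext ω
    simp only [EvSet, Set.mem_iInter, Set.mem_inter_iff, Set.mem_setOf_eq, Finset.mem_sdiff]
    try tauto
  rw [this]
  refine (MeasurableSet.biInter (Set.to_countable _) fun i _ =>
      MeasurableSet.biInter (Set.to_countable _) fun j _ =>
      MeasurableSet.iInter fun _ => h1 _ _).inter
    (((MeasurableSet.biInter (Set.to_countable _) fun i _ =>
      MeasurableSet.biInter (Set.to_countable _) fun j _ =>
      MeasurableSet.iInter fun _ => h1 _ _)).inter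
    (MeasurableSet.biInter (Set.to_countable _) fun i _ =>
      MeasurableSet.biInter (Set.to_countable _) fun j _ => h1 _ _))

set_option maxHeartbeats 1000000 in
lemma key_bound {N : ℕ} {Ω : Type*} [MeasureSpace Ω] [IsProbabilityMeasure (ℙ : Measure Ω)]
    (α β : ℝ) (hα : 0 < α) (hβ : 0 < β) (hαβ : α + β ≤ 1)
    (X : Sym2 (Fin N) → Ω → ℤ)
    (hind : iIndepFun X ℙ)
    (hpos : ∀ e : Sym2 (Fin N), ¬ e.IsDiag → ℙ {ω | X e ω = 1} = ENNReal.ofReal α)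
    (hneg : ∀ e : Sym2 (Fin N), ¬ e.IsDiag → ℙ {ω | X e ω = -1} = ENNReal.ofReal β)
    (S A : Finset (Fin N)) (hAS : A ⊆ S) :
    ℙ (EvSet X S A) ≤ ENNReal.ofReal (Real.exp
      ((|Real.log α| + |Real.log β|) * S.card - lamExp α β * (S.card : ℝ) ^ 2)) := by
  set a := |Real.log α| with ha_def
  set b := |Real.log β| with hb_def
  have hα1 : α < 1 := by linarith
  have hβ1 : β < 1 := by linarith
  have hloga : Real.log α < 0 := Real.log_neg hα hα1
  have hlogb : Real.log β < 0 := Real.log_neg hβ hβ1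
  have haeq : a = -Real.log α := abs_of_neg hloga
  have hbeq : b = -Real.log β := abs_of_neg hlogb
  have hαexp : α = Real.exp (-a) := by rw [haeq, neg_neg, Real.exp_log hα]
  have hβexp : β = Real.exp (-b) := by rw [hbeq, neg_neg, Real.exp_log hβ]
  set B := S \ A with hB_def
  have hAB : Disjoint A B := Finset.disjoint_sdiff
  set EC : Finset (Sym2 (Fin N)) := (A ×ˢ B).image Sym2.mk.uncurry with hEC_def
  set EA : Finset (Sym2 (Fin N)) := A.offDiag.image Sym2.mk.uncurry with hEA_def
  set EB : Finset (Sym2 (Fin N)) := B.offDiag.image Sym2.mk.uncurry with hEB_def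
  set E : Finset (Sym2 (Fin N)) := (EA ∪ EB) ∪ EC with hE_def
  set f : Sym2 (Fin N) → Set Ω := fun e => {ω | X e ω = if e ∈ EC then -1 else 1} with hf_def
  -- membership in EC forces one endpoint in A, other in B
  have hECmem : ∀ i j : Fin N, s(i, j) ∈ EC →
      (i ∈ A ∧ j ∈ B) ∨ (j ∈ A ∧ i ∈ B) := by
    intro i j h
    obtain ⟨⟨x, y⟩, hxy, heq⟩ := Finset.mem_image.1 h
    rw [Finset.mem_product] at hxy
    rcases (Sym2.mk_eq_mk_iff (p := (x, y)) (q := (i, j))).1 heq with h' | h'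
    · obtain ⟨rfl, rfl⟩ := Prod.mk.injEq .. ▸ Prod.ext_iff.1 h'
      exact Or.inl ⟨hxy.1, hxy.2⟩
    · obtain ⟨rfl, rfl⟩ := Prod.ext_iff.1 h'
      exact Or.inr ⟨hxy.1, hxy.2⟩
  have hEAnotC : ∀ e ∈ EA, e ∉ EC := by
    intro e he hc
    obtain ⟨⟨i, j⟩, hij, rfl⟩ := Finset.mem_image.1 he
    rw [Finset.mem_offDiag] at hij
    rcases hECmem i j hc with ⟨h1, h2⟩ | ⟨h1, h2⟩
    · exact (Finset.disjoint_left.1 hAB hij.2.1) h2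
    · exact (Finset.disjoint_left.1 hAB hij.1) h2
  have hEBnotC : ∀ e ∈ EB, e ∉ EC := by
    intro e he hc
    obtain ⟨⟨i, j⟩, hij, rfl⟩ := Finset.mem_image.1 he
    rw [Finset.mem_offDiag] at hij
    rcases hECmem i j hc with ⟨h1, h2⟩ | ⟨h1, h2⟩
    · exact (Finset.disjoint_left.1 hAB h1) hij.1
    · exact (Finset.disjoint_left.1 hAB h1) hij.2.1
  -- step 1 : event is contained in the big intersection
  have hsub : EvSet X S A ⊆ ⋂ e ∈ E, f e := by
    intro ω hω
    obtain ⟨h1, h2, h3⟩ := hω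
    simp only [Set.mem_iInter]
    intro e he
    rcases Finset.mem_union.1 he with he' | he'
    · rcases Finset.mem_union.1 he' with hea | heb
      · obtain ⟨⟨i, j⟩, hij, rfl⟩ := Finset.mem_image.1 hea
        rw [Finset.mem_offDiag] at hij
        have : s(i, j) ∉ EC := hEAnotC _ hea
        simp only [f, Set.mem_setOf_eq, Function.uncurry_apply_pair, if_neg this]
        exact h1 i hij.1 j hij.2.1 hij.2.2
      · obtain ⟨⟨i, j⟩, hij, rfl⟩ := Finset.mem_image.1 heb
        rw [Finset.mem_offDiag] at hij
        have : s(i, j) ∉ EC := hEBnotC _ heb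
        simp only [f, Set.mem_setOf_eq, Function.uncurry_apply_pair, if_neg this]
        exact h2 i hij.1 j hij.2.1 hij.2.2
    · obtain ⟨⟨i, j⟩, hij, rfl⟩ := Finset.mem_image.1 he'
      rw [Finset.mem_product] at hij
      simp only [f, Set.mem_setOf_eq, if_pos he']
      exact h3 i hij.1 j hij.2
  -- step 2 : independence product
  have hprod : ℙ (⋂ e ∈ E, f e) = ∏ e ∈ E, ℙ (f e) := by
    refine hind.meas_biInter fun e _ => ?_
    exact ⟨{if e ∈ EC then -1 else 1}, measurableSet_singleton _, rfl⟩
  -- step 3 : each edge in E is non-diagonal and has known probability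
  have hval : ∀ e ∈ E, ℙ (f e) = ENNReal.ofReal (Real.exp (-(if e ∈ EC then b else a))) := by
    intro e he
    have hnd : ¬ e.IsDiag := by
      rcases Finset.mem_union.1 he with he' | he'
      · rcases Finset.mem_union.1 he' with hea | heb
        · obtain ⟨⟨i, j⟩, hij, rfl⟩ := Finset.mem_image.1 hea
          rw [Finset.mem_offDiag] at hij
          exact fun h => hij.2.2 (Sym2.mk_isDiag_iff.1 h)
        · obtain ⟨⟨i, j⟩, hij, rfl⟩ := Finset.mem_image.1 heb
          rw [Finset.mem_offDiag] at hij
          exact fun h => hij.2.2 (Sym2.mk_isDiag_iff.1 h)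
      · obtain ⟨⟨i, j⟩, hij, rfl⟩ := Finset.mem_image.1 he'
        rw [Finset.mem_product] at hij
        exact fun h => Finset.disjoint_left.1 hAB (Sym2.mk_isDiag_iff.1 h ▸ hij.1) hij.2
        
    by_cases hc : e ∈ EC
    · simp only [f, if_pos hc]
      rw [hneg e hnd, ← hβexp]
    · simp only [f, if_neg hc]
      rw [hpos e hnd, ← hαexp]
  -- step 4: product as exponential of sum of weights
  set w : Sym2 (Fin N) → ℝ := fun e => if e ∈ EC then b else a with hw_def
  have ha0 : 0 ≤ a := abs_nonneg _
  have hb0 : 0 ≤ b := abs_nonneg _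
  have hprodval : ∏ e ∈ E, ℙ (f e) = ENNReal.ofReal (Real.exp (-∑ e ∈ E, w e)) := by
    rw [Finset.prod_congr rfl hval,
      ← ENNReal.ofReal_prod_of_nonneg (fun i _ => (Real.exp_pos _).le)]
    congr 1
    rw [← Real.exp_sum]
    congr 1
    rw [← Finset.sum_neg_distrib]
  -- step 5: lower bound on the total weight
  have hCD : Disjoint (EA ∪ EB) EC := by
    rw [Finset.disjoint_left]
    intro e he
    rcases Finset.mem_union.1 he with h | h
    exacts [hEAnotC e h, hEBnotC e h]
  have hAdisjB : Disjoint EA EB := by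
    rw [Finset.disjoint_left]
    rintro e hea heb
    obtain ⟨⟨i, j⟩, hij, rfl⟩ := Finset.mem_image.1 hea
    rw [Finset.mem_offDiag] at hij
    obtain ⟨⟨x, y⟩, hxy, heq⟩ := Finset.mem_image.1 heb
    rw [Finset.mem_offDiag] at hxy
    rcases Sym2.mk_eq_mk_iff.1 heq with h' | h'
    · obtain ⟨rfl, rfl⟩ := Prod.ext_iff.1 h'
      exact Finset.disjoint_left.1 hAB hij.1 hxy.1
    · obtain ⟨rfl, rfl⟩ := Prod.ext_iff.1 h'
      exact Finset.disjoint_left.1 hAB hij.1 hxy.2.1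
  have hsum : ∑ e ∈ E, w e = a * ((EA.card : ℝ) + EB.card) + b * EC.card := by
    rw [hE_def, Finset.sum_union hCD]
    have h1 : ∑ e ∈ EA ∪ EB, w e = a * ((EA.card : ℝ) + EB.card) := by
      rw [Finset.sum_congr rfl
        (fun e he => if_neg (fun hc => Finset.disjoint_left.1 hCD he hc)),
        Finset.sum_const, Finset.card_union_of_disjoint hAdisjB]
      push_cast
      ring
    have h2 : ∑ e ∈ EC, w e = b * EC.card := by
      rw [Finset.sum_congr rfl (fun e he => if_pos he), Finset.sum_const]
      push_cast
      ring
    rw [h1, h2]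
  have hECcard : EC.card = A.card * B.card := by
    rw [hEC_def, Finset.card_image_of_injOn, Finset.card_product]
    rintro ⟨x, y⟩ hxy ⟨x', y'⟩ hxy' heq
    rw [Finset.mem_coe, Finset.mem_product] at hxy hxy'
    rcases Sym2.mk_eq_mk_iff.1 heq with h' | h'
    · exact h'
    · obtain ⟨rfl, rfl⟩ := Prod.ext_iff.1 h'
      exact absurd hxy'.2 (fun hc => Finset.disjoint_left.1 hAB hxy.1 hc)
  have hfibers : ∀ (C : Finset (Fin N)), C.card * C.card - C.card ≤
      2 * (C.offDiag.image Sym2.mk.uncurry).card := by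
    intro C
    rw [← Finset.offDiag_card]
    refine Finset.card_le_mul_card_image _ 2 ?_
    intro e he
    obtain ⟨p₀, hp₀, rfl⟩ := Finset.mem_image.1 he
    have hsub2 : (C.offDiag.filter fun q => Sym2.mk.uncurry q = Sym2.mk.uncurry p₀) ⊆ {p₀, p₀.swap} := by
      intro q hq
      rcases Sym2.mk_eq_mk_iff.1 (Finset.mem_filter.1 hq).2 with h' | h'
      · simp [h']
      · simp [h']
    calc (C.offDiag.filter fun q => Sym2.mk.uncurry q = Sym2.mk.uncurry p₀).card
        ≤ ({p₀, p₀.swap} : Finset (Fin N × Fin N)).card := Finset.card_le_card hsub2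
      _ ≤ 2 := Finset.card_insert_le _ _ |>.trans (by simp)
  have hkk : ∀ (C : Finset (Fin N)),
      (C.card : ℝ) * C.card - C.card ≤ 2 * ((C.offDiag.image Sym2.mk.uncurry).card : ℝ) := by
    intro C
    have h1 := hfibers C
    have hle : C.card ≤ C.card * C.card := by
      rcases Nat.eq_zero_or_pos C.card with h | h
      · simp [h]
      · exact Nat.le_mul_of_pos_left _ h
    have h2 : ((C.card * C.card - C.card : ℕ) : ℝ) ≤
        2 * ((C.offDiag.image Sym2.mk.uncurry).card : ℝ) := by exact_mod_cast h1
    rwa [Nat.cast_sub hle, Nat.cast_mul] at h2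
  -- the real arithmetic inequality
  have hScard : (S.card : ℝ) = (A.card : ℝ) + B.card := by
    have := Finset.card_sdiff_add_card_eq_card hAS
    rw [hB_def]
    push_cast [← this]
    ring
  have harith : lamExp α β * (S.card : ℝ) ^ 2 - (a + b) * S.card ≤ ∑ e ∈ E, w e := by
    rw [hsum, hECcard]
    set k : ℝ := (A.card : ℝ) with hk_def
    set m : ℝ := (B.card : ℝ) with hm_def
    have hk0 : 0 ≤ k := Nat.cast_nonneg _
    have hm0 : 0 ≤ m := Nat.cast_nonneg _
    have h1 : k * k - k ≤ 2 * (EA.card : ℝ) := hkk A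
    have h2 : m * m - m ≤ 2 * (EB.card : ℝ) := hkk B
    have hcast : ((A.card * B.card : ℕ) : ℝ) = k * m := by push_cast; ring
    rw [hcast, hScard]
    rw [lamExp, ← ha_def, ← hb_def]
    split_ifs with hcase
    · -- β ≤ α, so a ≤ b
      have hba : a ≤ b := by
        rw [haeq, hbeq]
        have := Real.log_le_log hβ hcase
        linarith
      nlinarith [mul_le_mul_of_nonneg_left h1 ha0, mul_le_mul_of_nonneg_left h2 ha0,
        mul_nonneg (sub_nonneg.2 hba) (mul_nonneg hk0 hm0),
        mul_nonneg ha0 (add_nonneg hk0 hm0), mul_nonneg hb0 (add_nonneg hk0 hm0)]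
    · -- α < β, so b ≤ a
      push_neg at hcase
      have hba : b ≤ a := by
        rw [haeq, hbeq]
        have := Real.log_le_log hα hcase.le
        linarith
      nlinarith [mul_le_mul_of_nonneg_left h1 ha0, mul_le_mul_of_nonneg_left h2 ha0,
        mul_nonneg (sub_nonneg.2 hba) (sq_nonneg (k - m)),
        mul_nonneg ha0 (add_nonneg hk0 hm0), mul_nonneg hb0 (add_nonneg hk0 hm0)]
  calc ℙ (EvSet X S A) ≤ ℙ (⋂ e ∈ E, f e) := measure_mono hsub
    _ = ENNReal.ofReal (Real.exp (-∑ e ∈ E, w e)) := hprod.trans hprodval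
    _ ≤ _ := by
        apply ENNReal.ofReal_le_ofReal
        apply Real.exp_le_exp.2
        linarith [harith]

open scoped ENNReal in
lemma numSCBM_eq_card {N : ℕ} {Ω : Type*} (X : Sym2 (Fin N) → Ω → ℤ) (s : ℕ) (ω : Ω) :
    numSCBM X s ω = (Finset.univ.filter (fun S : Finset (Fin N) =>
      S.card = s ∧ ∃ A ∈ S.powerset, ω ∈ EvSet X S A)).card := by
  rw [numSCBM]
  congr 1
  apply Finset.filter_congr
  intro S _
  simp only [Finset.mem_powerset, EvSet, Set.mem_setOf_eq, and_congr_right_iff]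
  try (intro _; constructor
       · rintro ⟨A, hA, h⟩; exact ⟨A, hA, h⟩
       · rintro ⟨A, hA, h⟩; exact ⟨A, hA, h⟩)

lemma numSCBM_measurable {N : ℕ} {Ω : Type*} [MeasurableSpace Ω]
    (X : Sym2 (Fin N) → Ω → ℤ) (hmeas : ∀ e, Measurable (X e)) (s : ℕ) :
    Measurable (fun ω => numSCBM X s ω) := by
  have : (fun ω => numSCBM X s ω) = fun ω => ∑ S : Finset (Fin N),
      if S.card = s ∧ ∃ A ∈ S.powerset, ω ∈ EvSet X S A then 1 else 0 := by
    funext ω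
    rw [numSCBM_eq_card, Finset.card_filter]
  rw [this]
  refine Finset.measurable_sum _ fun S _ => Measurable.ite ?_ measurable_const measurable_const
  have : {ω : Ω | S.card = s ∧ ∃ A ∈ S.powerset, ω ∈ EvSet X S A} =
      {ω : Ω | S.card = s} ∩ ⋃ A ∈ S.powerset, EvSet X S A := by
    ext ω; simp [Set.mem_iUnion]
  rw [show (fun ω : Ω => S.card = s ∧ ∃ A ∈ S.powerset, ω ∈ EvSet X S A) =
    {ω : Ω | S.card = s ∧ ∃ A ∈ S.powerset, ω ∈ EvSet X S A} from rfl, this]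
  exact (MeasurableSet.const _).inter
    (MeasurableSet.biUnion (Set.to_countable _) fun A _ => EvSet_measurable X hmeas S A)

set_option maxHeartbeats 1000000 in
lemma lintegral_bound {N : ℕ} {Ω : Type*} [MeasureSpace Ω] [IsProbabilityMeasure (ℙ : Measure Ω)]
    (α β : ℝ) (hα : 0 < α) (hβ : 0 < β) (hαβ : α + β ≤ 1)
    (X : Sym2 (Fin N) → Ω → ℤ) (hmeas : ∀ e, Measurable (X e))
    (hind : iIndepFun X ℙ)
    (hpos : ∀ e : Sym2 (Fin N), ¬ e.IsDiag → ℙ {ω | X e ω = 1} = ENNReal.ofReal α)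
    (hneg : ∀ e : Sym2 (Fin N), ¬ e.IsDiag → ℙ {ω | X e ω = -1} = ENNReal.ofReal β)
    (s : ℕ) :
    ∫⁻ ω, (numSCBM X s ω : ℝ≥0∞) ≤ (N : ℝ≥0∞) ^ s * 2 ^ s *
      ENNReal.ofReal (Real.exp
        ((|Real.log α| + |Real.log β|) * s - lamExp α β * (s : ℝ) ^ 2)) := by
  set q := ENNReal.ofReal (Real.exp
    ((|Real.log α| + |Real.log β|) * s - lamExp α β * (s : ℝ) ^ 2)) with hq_def
  set 𝒮 := Finset.univ.filter (fun S : Finset (Fin N) => S.card = s) with hS_def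
  have hptwise : ∀ ω, (numSCBM X s ω : ℝ≥0∞) ≤
      ∑ S ∈ 𝒮, ∑ A ∈ S.powerset, (EvSet X S A).indicator (fun _ => (1 : ℝ≥0∞)) ω := by
    intro ω
    rw [numSCBM_eq_card]
    set P := fun S : Finset (Fin N) => S.card = s ∧ ∃ A ∈ S.powerset, ω ∈ EvSet X S A with hP
    calc ((Finset.univ.filter P).card : ℝ≥0∞) = ∑ S ∈ Finset.univ.filter P, 1 := by
          simp
      _ ≤ ∑ S ∈ Finset.univ.filter P, ∑ A ∈ S.powerset,
            (EvSet X S A).indicator (fun _ => (1 : ℝ≥0∞)) ω := by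
          refine Finset.sum_le_sum fun S hS => ?_
          obtain ⟨_, A, hA, hω⟩ := (Finset.mem_filter.1 hS).2
          calc (1 : ℝ≥0∞) = (EvSet X S A).indicator (fun _ => (1 : ℝ≥0∞)) ω := by
                rw [Set.indicator_of_mem hω]
            _ ≤ _ := Finset.single_le_sum
                (f := fun A' => (EvSet X S A').indicator (fun _ => (1 : ℝ≥0∞)) ω)
                (fun _ _ => zero_le) hA
      _ ≤ ∑ S ∈ 𝒮, ∑ A ∈ S.powerset,
            (EvSet X S A).indicator (fun _ => (1 : ℝ≥0∞)) ω := by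
          refine Finset.sum_le_sum_of_subset fun S hS => ?_
          exact Finset.mem_filter.2 ⟨Finset.mem_univ _, (Finset.mem_filter.1 hS).2.1⟩
  have hmeasind : ∀ (S A : Finset (Fin N)),
      Measurable ((EvSet X S A).indicator (fun _ => (1 : ℝ≥0∞))) :=
    fun S A => measurable_const.indicator (EvSet_measurable X hmeas S A)
  calc ∫⁻ ω, (numSCBM X s ω : ℝ≥0∞)
      ≤ ∫⁻ ω, ∑ S ∈ 𝒮, ∑ A ∈ S.powerset,
          (EvSet X S A).indicator (fun _ => (1 : ℝ≥0∞)) ω := lintegral_mono hptwise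
    _ = ∑ S ∈ 𝒮, ∑ A ∈ S.powerset, ∫⁻ ω,
          (EvSet X S A).indicator (fun _ => (1 : ℝ≥0∞)) ω := by
        rw [lintegral_finset_sum _ fun S _ =>
          Finset.measurable_sum _ fun A _ => hmeasind S A]
        exact Finset.sum_congr rfl fun S _ =>
          lintegral_finset_sum _ fun A _ => hmeasind S A
    _ = ∑ S ∈ 𝒮, ∑ A ∈ S.powerset, ℙ (EvSet X S A) := by
        refine Finset.sum_congr rfl fun S _ => Finset.sum_congr rfl fun A _ => ?_
        rw [lintegral_indicator_const (EvSet_measurable X hmeas S A), one_mul]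
    _ ≤ ∑ S ∈ 𝒮, ∑ A ∈ S.powerset, q := by
        refine Finset.sum_le_sum fun S hS => Finset.sum_le_sum fun A hA => ?_
        have hcard : S.card = s := (Finset.mem_filter.1 hS).2
        have := key_bound α β hα hβ hαβ X hind hpos hneg S A (Finset.mem_powerset.1 hA)
        rwa [hcard] at this
    _ = (𝒮.card : ℝ≥0∞) * (2 ^ s * q) := by
        rw [Finset.sum_congr rfl fun S hS => ?_]
        · rw [Finset.sum_const, nsmul_eq_mul]
        · rw [Finset.sum_const, Finset.card_powerset, nsmul_eq_mul,
            (Finset.mem_filter.1 hS).2]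
          push_cast
          ring
    _ ≤ (N : ℝ≥0∞) ^ s * 2 ^ s * q := by
        rw [mul_assoc]
        refine mul_le_mul_left ?_ _
        have h1 : 𝒮.card = N.choose s := by
          rw [hS_def, ← Finset.powerset_univ, ← Finset.powersetCard_eq_filter,
            Finset.card_powersetCard, Finset.card_univ, Fintype.card_fin]
        rw [h1]
        calc ((N.choose s : ℕ) : ℝ≥0∞) ≤ ((N ^ s : ℕ) : ℝ≥0∞) :=
              Nat.cast_le.2 (Nat.choose_le_pow N s)
          _ = (N : ℝ≥0∞) ^ s := by push_cast; rfl

lemma lamExp_pos {α β : ℝ} (hα : 0 < α) (hβ : 0 < β) (hαβ : α + β ≤ 1) :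
    0 < lamExp α β := by
  have hα1 : α < 1 := by linarith
  have hβ1 : β < 1 := by linarith
  have ha : 0 < |Real.log α| := abs_pos.2 (ne_of_lt (Real.log_neg hα hα1))
  have hb : 0 < |Real.log β| := abs_pos.2 (ne_of_lt (Real.log_neg hβ hβ1))
  rw [lamExp]
  split_ifs <;> linarith

set_option maxHeartbeats 1000000 in
lemma B_tendsto (α β ε : ℝ) (hα : 0 < α) (hβ : 0 < β) (hαβ : α + β ≤ 1) (hε0 : 0 < ε) :
    Tendsto (fun N : ℕ => (N : ℝ) ^ (⌈(1 + ε) * Real.log N / lamExp α β⌉₊) *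
      2 ^ (⌈(1 + ε) * Real.log N / lamExp α β⌉₊) *
      Real.exp ((|Real.log α| + |Real.log β|) *
          (⌈(1 + ε) * Real.log N / lamExp α β⌉₊ : ℝ) -
        lamExp α β * (⌈(1 + ε) * Real.log N / lamExp α β⌉₊ : ℝ) ^ 2))
      atTop (nhds 0) := by
  set lam := lamExp α β with hlam_def
  have hlam : 0 < lam := lamExp_pos hα hβ hαβ
  set M := |Real.log α| + |Real.log β| with hM_def
  have hM0 : 0 ≤ M := add_nonneg (abs_nonneg _) (abs_nonneg _)
  set s : ℕ → ℕ := fun N => ⌈(1 + ε) * Real.log N / lam⌉₊ with hs_def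
  set g : ℕ → ℝ := fun N =>
    (s N) * Real.log N + (s N) * Real.log 2 + M * s N - lam * (s N) ^ 2 with hg_def
  -- the lower-bound function tends to infinity
  have hlow : Tendsto (fun N : ℕ => (1 + ε) * Real.log N / lam) atTop atTop := by
    apply Tendsto.atTop_div_const hlam
    exact (Real.tendsto_log_atTop.comp tendsto_natCast_atTop_atTop).const_mul_atTop
      (by linarith)
  have hsN : Tendsto (fun N => (s N : ℝ)) atTop atTop :=
    tendsto_atTop_mono (fun N => Nat.le_ceil _) hlow
  have hlogN : Tendsto (fun N : ℕ => Real.log N) atTop atTop :=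
    Real.tendsto_log_atTop.comp tendsto_natCast_atTop_atTop
  -- eventually `g N ≤ -(s N)`
  have hev : ∀ᶠ N : ℕ in atTop, g N ≤ -(s N : ℝ) := by
    have h1 : ∀ᶠ N : ℕ in atTop, Real.log 2 + M + 1 ≤ ε * Real.log N := by
      have : Tendsto (fun N : ℕ => ε * Real.log N) atTop atTop :=
        hlogN.const_mul_atTop hε0
      exact this.eventually_ge_atTop _
    have h2 : ∀ᶠ N : ℕ in atTop, 0 ≤ Real.log N :=
      hlogN.eventually_ge_atTop 0
    filter_upwards [h1, h2] with N hN1 hN2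
    have hsnn : (0 : ℝ) ≤ s N := Nat.cast_nonneg _
    have hcl : (1 + ε) * Real.log N / lam ≤ s N := Nat.le_ceil _
    have hlam_s : (1 + ε) * Real.log N ≤ lam * s N := by
      rw [div_le_iff₀ hlam] at hcl
      linarith [hcl]
    have hsq : (1 + ε) * Real.log N * s N ≤ lam * (s N) ^ 2 := by
      have := mul_le_mul_of_nonneg_right hlam_s hsnn
      nlinarith [this]
    have : g N ≤ (s N) * (Real.log 2 + M - ε * Real.log N) := by
      rw [hg_def]
      simp only
      nlinarith [hsq]
    calc g N ≤ (s N) * (Real.log 2 + M - ε * Real.log N) := this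
      _ ≤ (s N) * (-1) := by
          apply mul_le_mul_of_nonneg_left _ hsnn
          linarith
      _ = -(s N : ℝ) := by ring
  have hg : Tendsto g atTop atBot := by
    apply tendsto_atBot_mono' atTop hev
    exact tendsto_neg_atTop_atBot.comp hsN
  have hexp : Tendsto (fun N => Real.exp (g N)) atTop (nhds 0) :=
    Real.tendsto_exp_atBot.comp hg
  apply hexp.congr'
  filter_upwards [eventually_ge_atTop 1] with N hN
  have hNpos : (0 : ℝ) < N := by exact_mod_cast hN
  have e1 : Real.exp ((s N : ℝ) * Real.log N) = (N : ℝ) ^ (s N) := by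
    rw [Real.exp_nat_mul, Real.exp_log hNpos]
  have e2 : Real.exp ((s N : ℝ) * Real.log 2) = (2 : ℝ) ^ (s N) := by
    rw [Real.exp_nat_mul, Real.exp_log two_pos]
  rw [← e1, ← e2, ← Real.exp_add, ← Real.exp_add]
  congr 1
  rw [hg_def]
  ring


end AuxSCBM

set_option maxHeartbeats 1000000 in
/-- Supercritical size: for fixed `0 < α, β` with `α + β ≤ 1` and any `ε ∈ (0,1)`, taking
`s = ⌈(1+ε)·log N/λ(α,β)⌉`, the expected number of strong-correlation balanced modules of
size `s` in `G(N,α,β)` tends to `0`, and hence `P(Z_s ≥ 1) → 0` as `N → ∞`. -/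
theorem supercritical_modules_vanish
    (α β : ℝ) (hα : 0 < α) (hβ : 0 < β) (hαβ : α + β ≤ 1)
    (ε : ℝ) (hε0 : 0 < ε) (hε1 : ε < 1)
    (Ω : ℕ → Type) [∀ N, MeasureSpace (Ω N)]
    [∀ N, IsProbabilityMeasure (ℙ : Measure (Ω N))]
    (X : ∀ N, Sym2 (Fin N) → Ω N → ℤ)
    (hmeas : ∀ N e, Measurable (X N e))
    (hind : ∀ N, iIndepFun (X N) ℙ)
    (hpos : ∀ N, ∀ e : Sym2 (Fin N), ¬ e.IsDiag →
      ℙ {ω | X N e ω = 1} = ENNReal.ofReal α)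
    (hneg : ∀ N, ∀ e : Sym2 (Fin N), ¬ e.IsDiag →
      ℙ {ω | X N e ω = -1} = ENNReal.ofReal β) :
    Tendsto (fun N : ℕ =>
        ∫ ω, (numSCBM (X N) ⌈(1 + ε) * Real.log N / lamExp α β⌉₊ ω : ℝ))
      atTop (nhds 0) ∧
    Tendsto (fun N : ℕ =>
        ℙ {ω | 1 ≤ numSCBM (X N) ⌈(1 + ε) * Real.log N / lamExp α β⌉₊ ω})
      atTop (nhds 0) := by
  classical
  set lam := lamExp α β with hlam_def
  set s : ℕ → ℕ := fun N => ⌈(1 + ε) * Real.log N / lam⌉₊ with hs_def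
  set L : ℕ → ℝ≥0∞ := fun N => ∫⁻ ω, (numSCBM (X N) (s N) ω : ℝ≥0∞) with hL_def
  set B : ℕ → ℝ := fun N => (N : ℝ) ^ (s N) * 2 ^ (s N) *
    Real.exp ((|Real.log α| + |Real.log β|) * (s N : ℝ) - lam * (s N : ℝ) ^ 2) with hB_def
  have hkey : ∀ N, L N ≤ ENNReal.ofReal (B N) := by
    intro N
    refine le_trans
      (lintegral_bound α β hα hβ hαβ (X N) (hmeas N) (hind N) (hpos N) (hneg N) (s N)) ?_
    rw [hB_def]
    simp only
    rw [ENNReal.ofReal_mul (by positivity), ENNReal.ofReal_mul (by positivity),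
      ENNReal.ofReal_pow (by positivity), ENNReal.ofReal_pow (by norm_num),
      ENNReal.ofReal_natCast]
    norm_num
    exact le_rfl
  have hB0 : Tendsto B atTop (nhds 0) := B_tendsto α β ε hα hβ hαβ hε0
  have hofB : Tendsto (fun N => ENNReal.ofReal (B N)) atTop (nhds 0) := by
    have := ENNReal.tendsto_ofReal hB0
    simpa using this
  have hL0 : Tendsto L atTop (nhds 0) :=
    tendsto_of_tendsto_of_tendsto_of_le_of_le tendsto_const_nhds hofB
      (fun N => zero_le) hkey
  constructor
  · have heq : ∀ N, ∫ ω, (numSCBM (X N) (s N) ω : ℝ) = (L N).toReal := by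
      intro N
      rw [hL_def]
      simp only
      rw [integral_eq_lintegral_of_nonneg_ae (ae_of_all _ fun ω => Nat.cast_nonneg _)
        ((measurable_from_top.comp
          (numSCBM_measurable (X N) (hmeas N) (s N))).aestronglyMeasurable)]
      congr 1
      apply lintegral_congr
      intro ω
      exact ENNReal.ofReal_natCast _
    have htoReal : Tendsto (fun N => (L N).toReal) atTop (nhds 0) := by
      have h := (ENNReal.tendsto_toReal (by simp : (0 : ℝ≥0∞) ≠ ⊤)).comp hL0
      simpa [Function.comp_def] using h
    exact htoReal.congr (fun N => (heq N).symm)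
  · have hmark : ∀ N, ℙ {ω | 1 ≤ numSCBM (X N) (s N) ω} ≤ L N := by
      intro N
      have hZm : Measurable (fun ω => (numSCBM (X N) (s N) ω : ℝ≥0∞)) :=
        measurable_from_top.comp (numSCBM_measurable (X N) (hmeas N) (s N))
      have h := mul_meas_ge_le_lintegral₀ (μ := (ℙ : Measure (Ω N))) hZm.aemeasurable 1
      rw [one_mul] at h
      have hset : {ω | (1 : ℝ≥0∞) ≤ (numSCBM (X N) (s N) ω : ℝ≥0∞)} =
          {ω | 1 ≤ numSCBM (X N) (s N) ω} := by
        ext ω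
        simp [Nat.one_le_cast]
      rw [hset] at h
      exact h
    exact tendsto_of_tendsto_of_tendsto_of_le_of_le tendsto_const_nhds hL0
      (fun N => zero_le) hmark
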